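/- arXiv:2405.18282 — 5 statements merged into one kernel-verified Lean document; each statement's English description precedes it below -/
import Mathlib

section
/- Let Q₁, Q₂, Q₃ ∈ ℝ^{(n+1)×(n+1)} be symmetric matrices with associated quadratic forms fᵢʰ(x) = xᵀQᵢx, and let S^h = {x ∈ ℝ^{n+1} | fᵢʰ(x) ≤ 0 for i = 1,2,3}. If there exists λ ∈ ℝ³ with λᵢ ≥ 0 such that Q_λ = λ₁Q₁ + λ₂Q₂ + λ₃Q₃ has n positive eigenvalues and one negative eigenvalue, then there exists an n-dimensional linear subspace H ⊆ ℝ^{n+1} with S^h ∩ H = {0}. -/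
open Matrix

private lemma sum_dotProduct' {m : Type*} [Fintype m] {ι : Type*} (s : Finset ι)
    (f : ι → m → ℝ) (y : m → ℝ) : (∑ i ∈ s, f i) ⬝ᵥ y = ∑ i ∈ s, f i ⬝ᵥ y := by
  simp only [dotProduct, Finset.sum_apply, Finset.sum_mul]
  exact Finset.sum_comm

private lemma dotProduct_sum' {m : Type*} [Fintype m] {ι : Type*} (s : Finset ι)
    (x : m → ℝ) (f : ι → m → ℝ) : x ⬝ᵥ (∑ i ∈ s, f i) = ∑ i ∈ s, x ⬝ᵥ f i := by
  simp only [dotProduct, Finset.sum_apply, Finset.mul_sum]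
  exact Finset.sum_comm

private lemma mulVec_sum' {m : Type*} [Fintype m] {ι : Type*} (s : Finset ι)
    (A : Matrix m m ℝ) (f : ι → m → ℝ) : A *ᵥ (∑ i ∈ s, f i) = ∑ i ∈ s, A *ᵥ f i := by
  ext k
  simp only [mulVec, dotProduct, Finset.sum_apply, Finset.mul_sum]
  exact Finset.sum_comm

private lemma sum_mulVec' {m : Type*} [Fintype m] {ι : Type*} (s : Finset ι)
    (f : ι → Matrix m m ℝ) (x : m → ℝ) : (∑ i ∈ s, f i) *ᵥ x = ∑ i ∈ s, f i *ᵥ x := by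
  ext k
  simp only [mulVec, dotProduct, Finset.sum_apply, Matrix.sum_apply, Finset.sum_mul]
  exact Finset.sum_comm

theorem stmt_2 {n : ℕ} (Q : Fin 3 → Matrix (Fin (n+1)) (Fin (n+1)) ℝ)
    (hsym : ∀ i, (Q i).IsHermitian)
    (l : Fin 3 → ℝ) (hl : ∀ i, 0 ≤ l i)
    (h : (∑ i, l i • Q i).IsHermitian)
    (hpos : (Finset.univ.filter fun j => 0 < h.eigenvalues j).card = n)
    (hneg : (Finset.univ.filter fun j => h.eigenvalues j < 0).card = 1) :
    ∃ H : Submodule ℝ (Fin (n+1) → ℝ), Module.finrank ℝ H = n ∧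
      ∀ x ∈ H, (∀ i, x ⬝ᵥ (Q i).mulVec x ≤ 0) → x = 0 := by
  classical
  set A : Matrix (Fin (n+1)) (Fin (n+1)) ℝ := ∑ i, l i • Q i with hAdef
  set P : Finset (Fin (n+1)) := Finset.univ.filter fun j => 0 < h.eigenvalues j with hPdef
  set v : Fin (n+1) → (Fin (n+1) → ℝ) := fun j => (h.eigenvectorBasis j : Fin (n+1) → ℝ)
    with hvdef
  have hdot : ∀ j k, v j ⬝ᵥ v k = if j = k then 1 else 0 := by
    intro j k
    have := h.eigenvectorBasis.orthonormal
    rw [orthonormal_iff_ite] at this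
    have h2 := this j k
    simpa [dotProduct, PiLp.inner_apply, mul_comm] using h2
  have hAv : ∀ j, A *ᵥ v j = h.eigenvalues j • v j := fun j => h.mulVec_eigenvectorBasis j
  have hli : LinearIndependent ℝ (fun j : P => v j) := by
    have hli0 : LinearIndependent ℝ v := by
      have := h.eigenvectorBasis.orthonormal.linearIndependent
      have h2 := this.map' (WithLp.linearEquiv 2 ℝ (Fin (n+1) → ℝ)).toLinearMap
        (WithLp.linearEquiv 2 ℝ (Fin (n+1) → ℝ)).ker
      exact h2
    exact hli0.comp _ Subtype.val_injective
  refine ⟨Submodule.span ℝ (Set.range fun j : P => v j), ?_, ?_⟩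
  · rw [finrank_span_eq_card hli]
    simp [hpos]
  · intro x hx hile
    rw [Submodule.mem_span_range_iff_exists_fun ℝ] at hx
    obtain ⟨c, hc⟩ := hx
    have key : x ⬝ᵥ A *ᵥ x = ∑ j : P, h.eigenvalues j * (c j)^2 := by
      have hAx : A *ᵥ x = ∑ j : P, c j • h.eigenvalues (j : Fin (n+1)) • v j := by
        rw [← hc, mulVec_sum']
        refine Finset.sum_congr rfl fun j _ => ?_
        rw [mulVec_smul, hAv]
      rw [hAx, ← hc, sum_dotProduct']
      rw [Finset.sum_congr rfl fun j _ => dotProduct_sum' _ _ _]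
      rw [Finset.sum_congr rfl fun j _ => Finset.sum_congr rfl fun k _ => by
        rw [smul_dotProduct, dotProduct_smul, dotProduct_smul, hdot]]
      simp only [smul_eq_mul, mul_ite, mul_one, mul_zero]
      refine Finset.sum_congr rfl fun j _ => ?_
      rw [Finset.sum_eq_single j]
      · rw [if_pos rfl]; ring
      · intro k _ hk
        rw [if_neg fun hh => hk (Subtype.ext hh).symm]
      · intro hj; exact absurd (Finset.mem_univ j) hj
    have hle : x ⬝ᵥ A *ᵥ x ≤ 0 := by
      have hAx2 : A *ᵥ x = ∑ i, l i • ((Q i) *ᵥ x) := by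
        rw [hAdef, sum_mulVec']
        exact Finset.sum_congr rfl fun i _ => smul_mulVec _ _ _
      rw [hAx2, dotProduct_sum']
      refine Finset.sum_nonpos fun i _ => ?_
      rw [dotProduct_smul, smul_eq_mul]
      exact mul_nonpos_of_nonneg_of_nonpos (hl i) (hile i)
    rw [key] at hle
    have hterm : ∀ j : P, 0 ≤ h.eigenvalues (j : Fin (n+1)) * (c j)^2 := by
      intro j
      have hj : 0 < h.eigenvalues (j : Fin (n+1)) := (Finset.mem_filter.1 j.2).2
      positivity
    have hzero : ∀ j : P, h.eigenvalues (j : Fin (n+1)) * (c j)^2 = 0 := by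
      intro j
      have hsum0 : ∑ j : P, h.eigenvalues (j : Fin (n+1)) * (c j)^2 = 0 :=
        le_antisymm hle (Finset.sum_nonneg fun j _ => hterm j)
      exact (Finset.sum_eq_zero_iff_of_nonneg fun j _ => hterm j).1 hsum0 j (Finset.mem_univ _)
    have hc0 : ∀ j : P, c j = 0 := by
      intro j
      have hj : 0 < h.eigenvalues (j : Fin (n+1)) := (Finset.mem_filter.1 j.2).2
      have := hzero j
      have : (c j)^2 = 0 := by
        rcases mul_eq_zero.1 this with h1 | h1
        · exact absurd h1 (ne_of_gt hj)
        · exact h1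
      exact pow_eq_zero_iff (by norm_num) |>.1 this
    rw [← hc]
    exact Finset.sum_eq_zero fun j _ => by rw [hc0 j, zero_smul]
end

section
/- Let Q₁, Q₂, Q₃ ∈ ℝ^{(n+1)×(n+1)} be symmetric with quadratic functions fᵢ(x) = [xᵀ 1] Qᵢ [xᵀ 1]ᵀ for x ∈ ℝⁿ, and S = {x ∈ ℝⁿ | fᵢ(x) ≤ 0, i ∈ [3]}. Suppose S^h ∩ {(x, x_{n+1}) ∈ ℝ^{n+1} | x_{n+1} = 0} = {0}, where S^h = {u ∈ ℝ^{n+1} | uᵀQᵢu ≤ 0, i ∈ [3]}. If α ∈ ℝⁿ and β ∈ ℝ satisfy αᵀx < β for all x ∈ S, then the hyperplane H = {(u, u_{n+1}) ∈ ℝ^{n+1} | αᵀu = β u_{n+1}} satisfies S^h ∩ H = {0}. -/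
open Matrix

theorem stmt_3 {n : ℕ} (Q : Fin 3 → Matrix (Fin (n+1)) (Fin (n+1)) ℝ)
    (hsym : ∀ i, (Q i).IsHermitian)
    (hinf : ∀ u : Fin (n+1) → ℝ,
      (∀ i, u ⬝ᵥ (Q i).mulVec u ≤ 0) → u (Fin.last n) = 0 → u = 0)
    (α : Fin n → ℝ) (β : ℝ)
    (hsep : ∀ x : Fin n → ℝ,
      (∀ i, (Fin.snoc x 1 : Fin (n+1) → ℝ) ⬝ᵥ (Q i).mulVec (Fin.snoc x 1 : Fin (n+1) → ℝ) ≤ 0) →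
      ∑ i, α i * x i < β) :
    ∀ u : Fin (n+1) → ℝ, (∀ i, u ⬝ᵥ (Q i).mulVec u ≤ 0) →
      (∑ i, α i * u i.castSucc) = β * u (Fin.last n) → u = 0 := by
  intro u hu hlin
  by_cases ht : u (Fin.last n) = 0
  · exact hinf u hu ht
  · exfalso
    set t := u (Fin.last n) with htdef
    set v : Fin (n+1) → ℝ := (t⁻¹) • u with hv
    have hvlast : v (Fin.last n) = 1 := by
      simp [hv, inv_mul_cancel₀ ht]
      exact inv_mul_cancel₀ ht
    have hsnoc : (Fin.snoc (fun i => v i.castSucc) 1 : Fin (n+1) → ℝ) = v := by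
      funext j
      refine Fin.lastCases ?_ ?_ j
      · simp [hvlast]
      · intro i; simp
    have hq : ∀ i, v ⬝ᵥ (Q i).mulVec v ≤ 0 := by
      intro i
      have h1 : v ⬝ᵥ (Q i).mulVec v = t⁻¹ * t⁻¹ * (u ⬝ᵥ (Q i).mulVec u) := by
        simp [hv, Matrix.mulVec_smul, smul_dotProduct, dotProduct_smul, mul_assoc]
      rw [h1]
      have := hu i
      nlinarith [sq_nonneg t⁻¹]
    have hlt := hsep (fun i => v i.castSucc) (by rw [hsnoc]; exact fun i => hq i)
    have heq : ∑ i, α i * v i.castSucc = β := by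
      have h2 : ∑ i, α i * v i.castSucc = t⁻¹ * ∑ i, α i * u i.castSucc := by
        rw [Finset.mul_sum]
        refine Finset.sum_congr rfl fun i _ => ?_
        simp [hv]; ring
      rw [h2, hlin]
      field_simp
    linarith
end

section
/- Let Q₁, Q₂, Q₃ ∈ ℝ^{(n+1)×(n+1)} be symmetric matrices, set Λ = {λ ∈ ℝ³, λᵢ ≥ 0 | Q_λ has exactly one negative eigenvalue}. Suppose λ ∈ Λ generates an extreme ray of Λ and λ is not a scalar multiple of a standard basis vector but has at most two nonzero entries. Then det(Q_λ) = 0. -/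
open Matrix

variable {m : ℕ}

lemma herm_transpose {A : Matrix (Fin m) (Fin m) ℝ} (hA : A.IsHermitian) : Aᵀ = A := by
  have := hA.eq
  simpa [conjTranspose, Matrix.map, transpose] using this

lemma dot_eq_inner (x y : EuclideanSpace ℝ (Fin m)) :
    dotProduct (x : Fin m → ℝ) (y : Fin m → ℝ) = (inner ℝ x y : ℝ) := by
  simp [dotProduct, PiLp.inner_apply, mul_comm]

lemma repr_mulVec {A : Matrix (Fin m) (Fin m) ℝ} (hA : A.IsHermitian)
    (x : EuclideanSpace ℝ (Fin m)) (k : Fin m) :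
    hA.eigenvectorBasis.repr (WithLp.toLp 2 (A *ᵥ x)) k
      = hA.eigenvalues k * hA.eigenvectorBasis.repr x k := by
  rw [OrthonormalBasis.repr_apply_apply, OrthonormalBasis.repr_apply_apply,
    ← dot_eq_inner, ← dot_eq_inner]
  show dotProduct (⇑(hA.eigenvectorBasis k)) (A *ᵥ x)
      = hA.eigenvalues k * dotProduct (⇑(hA.eigenvectorBasis k)) x
  rw [dotProduct_mulVec, ← mulVec_transpose, herm_transpose hA, hA.mulVec_eigenvectorBasis,
    smul_dotProduct]
  rfl

lemma qf_eq_sum {A : Matrix (Fin m) (Fin m) ℝ} (hA : A.IsHermitian)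
    (x : EuclideanSpace ℝ (Fin m)) :
    dotProduct (x : Fin m → ℝ) (A *ᵥ x) =
      ∑ k, hA.eigenvalues k * (hA.eigenvectorBasis.repr x k)^2 := by
  rw [dot_eq_inner x (WithLp.toLp 2 (A *ᵥ x)),
    ← hA.eigenvectorBasis.repr.inner_map_map x (WithLp.toLp 2 (A *ᵥ x))]
  rw [PiLp.inner_apply]
  refine Finset.sum_congr rfl fun k _ => ?_
  rw [repr_mulVec hA x k]
  simp [pow_two]; ring

lemma norm_sq_eq_sum {A : Matrix (Fin m) (Fin m) ℝ} (hA : A.IsHermitian)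
    (x : EuclideanSpace ℝ (Fin m)) :
    ‖x‖^2 = ∑ k, (hA.eigenvectorBasis.repr x k)^2 := by
  rw [← real_inner_self_eq_norm_sq, ← hA.eigenvectorBasis.repr.inner_map_map x x,
    PiLp.inner_apply]
  refine Finset.sum_congr rfl fun k _ => ?_
  simp [pow_two]

lemma repr_zero_of_span {A : Matrix (Fin m) (Fin m) ℝ} (hA : A.IsHermitian)
    {S : Set (Fin m)} {x : EuclideanSpace ℝ (Fin m)}
    (hx : x ∈ Submodule.span ℝ (⇑hA.eigenvectorBasis '' S)) {k : Fin m} (hk : k ∉ S) :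
    hA.eigenvectorBasis.repr x k = 0 := by
  rw [OrthonormalBasis.repr_apply_apply]
  induction hx using Submodule.span_induction with
  | mem y hy =>
    obtain ⟨j, hj, rfl⟩ := hy
    exact hA.eigenvectorBasis.orthonormal.2 (fun h => hk (h ▸ hj))
  | zero => simp
  | add y z _ _ hy hz => rw [inner_add_right, hy, hz, add_zero]
  | smul a y _ hy => rw [inner_smul_right, hy, mul_zero]

lemma finrank_span_image {A : Matrix (Fin m) (Fin m) ℝ} (hA : A.IsHermitian)
    (S : Finset (Fin m)) :
    Module.finrank ℝ (Submodule.span ℝ (⇑hA.eigenvectorBasis '' ↑S)) = S.card := by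
  rw [Set.image_eq_range]
  have hli : LinearIndependent ℝ (fun x : ↑(↑S : Set (Fin m)) => hA.eigenvectorBasis ↑x) :=
    hA.eigenvectorBasis.orthonormal.linearIndependent.comp _ Subtype.val_injective
  rw [finrank_span_eq_card hli]
  simp

lemma lemma_two {n : ℕ} {B : Matrix (Fin (n+1)) (Fin (n+1)) ℝ} (hB : B.IsHermitian)
    (v : Fin (n+1) → ℝ) (hv : dotProduct v (B *ᵥ v) < 0)
    (W : Submodule ℝ (EuclideanSpace ℝ (Fin (n+1)))) (hWr : Module.finrank ℝ W = n)
    (hWp : ∀ x ∈ W, x ≠ 0 → 0 < dotProduct (x : Fin (n+1) → ℝ) (B *ᵥ x)) :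
    (Finset.univ.filter fun k => hB.eigenvalues k < 0).card = 1 := by
  classical
  set b := hB.eigenvectorBasis with hb
  set T : Finset (Fin (n+1)) := Finset.univ.filter (fun k => hB.eigenvalues k ≤ 0) with hT
  set U : Submodule ℝ (EuclideanSpace ℝ (Fin (n+1))) :=
    Submodule.span ℝ (⇑b '' ↑T) with hU
  -- W ⊓ U = ⊥
  have hdisj : W ⊓ U = ⊥ := by
    rw [Submodule.eq_bot_iff]
    intro x hx
    by_contra hx0
    have h1 : 0 < dotProduct (x : Fin (n+1) → ℝ) (B *ᵥ x) := hWp x hx.1 hx0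
    have h2 : dotProduct (x : Fin (n+1) → ℝ) (B *ᵥ x) ≤ 0 := by
      rw [qf_eq_sum hB x]
      apply Finset.sum_nonpos
      intro k _
      by_cases hk : k ∈ T
      · have hk' : hB.eigenvalues k ≤ 0 := by simpa [hT] using hk
        exact mul_nonpos_of_nonpos_of_nonneg hk' (sq_nonneg _)
      · rw [repr_zero_of_span hB hx.2 (by simpa using hk)]
        simp
    linarith
  have hUr : Module.finrank ℝ U = T.card := finrank_span_image hB T
  have hsum := Submodule.finrank_sup_add_finrank_inf_eq W U
  rw [hdisj] at hsum
  have hle : Module.finrank ℝ ↥(W ⊔ U) ≤ n + 1 := by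
    have := Submodule.finrank_le (W ⊔ U)
    simpa using this
  have hTcard : T.card ≤ 1 := by
    simp only [finrank_bot, add_zero] at hsum
    omega
  -- negative eigenvalue exists
  have hneg : (Finset.univ.filter fun k => hB.eigenvalues k < 0).Nonempty := by
    by_contra hcon
    rw [Finset.not_nonempty_iff_eq_empty, Finset.filter_eq_empty_iff] at hcon
    have : 0 ≤ dotProduct v (B *ᵥ v) := by
      rw [qf_eq_sum hB (WithLp.toLp 2 v)]
      apply Finset.sum_nonneg
      intro k _
      exact mul_nonneg (le_of_not_gt (hcon (Finset.mem_univ k))) (sq_nonneg _)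
    linarith
  have hsub : (Finset.univ.filter fun k => hB.eigenvalues k < 0) ⊆ T := by
    intro k hk
    simp only [Finset.mem_filter, Finset.mem_univ, true_and, hT] at hk ⊢
    linarith
  have := Finset.card_le_card hsub
  have := Finset.card_pos.mpr hneg
  omega

lemma lemma_one {n : ℕ} {A : Matrix (Fin (n+1)) (Fin (n+1)) ℝ} (hA : A.IsHermitian)
    (hcount : (Finset.univ.filter fun k => hA.eigenvalues k < 0).card = 1)
    (hdet : A.det ≠ 0) :
    (∃ v : Fin (n+1) → ℝ, dotProduct v (A *ᵥ v) < 0) ∧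
    ∃ (W : Submodule ℝ (EuclideanSpace ℝ (Fin (n+1)))) (c : ℝ), 0 < c ∧
      Module.finrank ℝ W = n ∧
      ∀ x ∈ W, c * ‖x‖^2 ≤ dotProduct (x : Fin (n+1) → ℝ) (A *ᵥ x) := by
  classical
  have hnz : ∀ k, hA.eigenvalues k ≠ 0 := by
    intro k hk
    apply hdet
    rw [hA.det_eq_prod_eigenvalues]
    exact Finset.prod_eq_zero (Finset.mem_univ k) (by simp [hk])
  constructor
  · obtain ⟨k₀, hk₀⟩ := Finset.card_pos.mp (by rw [hcount]; norm_num)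
    simp only [Finset.mem_filter, Finset.mem_univ, true_and] at hk₀
    refine ⟨(hA.eigenvectorBasis k₀ : EuclideanSpace ℝ (Fin (n+1))), ?_⟩
    rw [qf_eq_sum hA (hA.eigenvectorBasis k₀)]
    have hrepr : hA.eigenvectorBasis.repr (hA.eigenvectorBasis k₀) =
        EuclideanSpace.single k₀ 1 := hA.eigenvectorBasis.repr_self k₀
    rw [hrepr]
    rw [Finset.sum_eq_single k₀]
    · simpa using hk₀
    · intro k _ hk; simp [EuclideanSpace.single_apply, hk]
    · simp
  · set S : Finset (Fin (n+1)) := Finset.univ.filter (fun k => 0 < hA.eigenvalues k) with hS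
    have hScard : S.card = n := by
      have hpart := Finset.card_filter_add_card_filter_not
        (s := (Finset.univ : Finset (Fin (n+1)))) (p := fun k => hA.eigenvalues k < 0)
      have heq : Finset.univ.filter (fun k => ¬ hA.eigenvalues k < 0) = S := by
        ext k
        simp only [Finset.mem_filter, Finset.mem_univ, true_and, hS, not_lt]
        exact ⟨fun h => lt_of_le_of_ne h (Ne.symm (hnz k)), le_of_lt⟩
      rw [hcount, heq] at hpart
      simp only [Finset.card_univ, Fintype.card_fin] at hpart
      omega
    obtain ⟨c, hc, hcle⟩ : ∃ c : ℝ, 0 < c ∧ ∀ k ∈ S, c ≤ hA.eigenvalues k := by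
      rcases S.eq_empty_or_nonempty with h | h
      · exact ⟨1, one_pos, by simp [h]⟩
      · refine ⟨S.inf' h hA.eigenvalues, ?_, fun k hk => Finset.inf'_le _ hk⟩
        rw [Finset.lt_inf'_iff]
        intro k hk
        simpa [hS] using (Finset.mem_filter.mp hk).2
    refine ⟨Submodule.span ℝ (⇑hA.eigenvectorBasis '' ↑S), c, hc, ?_, ?_⟩
    · rw [finrank_span_image hA S, hScard]
    · intro x hx
      have hzero : ∀ k ∉ S, hA.eigenvectorBasis.repr x k = 0 := fun k hk =>
        repr_zero_of_span hA hx (by simpa using hk)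
      rw [qf_eq_sum hA x, norm_sq_eq_sum hA x, Finset.mul_sum]
      rw [← Finset.sum_subset (Finset.subset_univ S)
        (fun k _ hk => by rw [hzero k hk]; ring),
        ← Finset.sum_subset (Finset.subset_univ S)
        (fun k _ hk => by rw [hzero k hk]; ring)]
      apply Finset.sum_le_sum
      intro k hk
      exact mul_le_mul_of_nonneg_right (hcle k hk) (sq_nonneg _)

lemma qf_abs_le (P : Matrix (Fin m) (Fin m) ℝ) (x : EuclideanSpace ℝ (Fin m)) :
    |dotProduct (x : Fin m → ℝ) (P *ᵥ x)| ≤ (∑ a, ∑ b, |P a b|) * ‖x‖^2 := by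
  have hxa : ∀ a, |x a| ≤ ‖x‖ := by
    intro a
    have h3 : ‖x‖^2 = ∑ i, (x i)^2 := by
      rw [EuclideanSpace.norm_eq, Real.sq_sqrt (Finset.sum_nonneg fun i _ => sq_nonneg _)]
      simp [Real.norm_eq_abs, sq_abs]
    have h2 : (x a)^2 ≤ ‖x‖^2 := by
      rw [h3]
      exact Finset.single_le_sum (f := fun i => (x i)^2) (fun i _ => sq_nonneg _)
        (Finset.mem_univ a)
    have h4 := Real.sqrt_le_sqrt h2
    rwa [Real.sqrt_sq_eq_abs, Real.sqrt_sq (norm_nonneg x)] at h4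
  calc |dotProduct (x : Fin m → ℝ) (P *ᵥ x)|
      = |∑ a, ∑ b, x a * (P a b * x b)| := by
        simp [dotProduct, mulVec, Finset.mul_sum]
    _ ≤ ∑ a, ∑ b, |x a * (P a b * x b)| :=
        (Finset.abs_sum_le_sum_abs _ _).trans
          (Finset.sum_le_sum fun a _ => Finset.abs_sum_le_sum_abs _ _)
    _ ≤ ∑ a, ∑ b, |P a b| * ‖x‖^2 := by
        refine Finset.sum_le_sum fun a _ => Finset.sum_le_sum fun b _ => ?_
        rw [abs_mul, abs_mul]
        calc |x a| * (|P a b| * |x b|) = |P a b| * (|x a| * |x b|) := by ring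
          _ ≤ |P a b| * (‖x‖ * ‖x‖) :=
              mul_le_mul_of_nonneg_left
                (mul_le_mul (hxa a) (hxa b) (abs_nonneg _) (norm_nonneg _)) (abs_nonneg _)
          _ = |P a b| * ‖x‖^2 := by ring
    _ = (∑ a, ∑ b, |P a b|) * ‖x‖^2 := by
        rw [Finset.sum_mul]
        exact Finset.sum_congr rfl fun a _ => (Finset.sum_mul _ _ _).symm

lemma herm_sum {n : ℕ} (Q : Fin 3 → Matrix (Fin (n+1)) (Fin (n+1)) ℝ)
    (hsym : ∀ i, (Q i).IsHermitian) (c : Fin 3 → ℝ) :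
    (∑ j, c j • Q j).IsHermitian := by
  unfold Matrix.IsHermitian
  rw [conjTranspose_sum]
  refine Finset.sum_congr rfl fun j _ => ?_
  rw [conjTranspose_smul]
  simp [herm_transpose (hsym j)]

lemma comb_eq {n : ℕ} (Q : Fin 3 → Matrix (Fin (n+1)) (Fin (n+1)) ℝ)
    (a s : ℝ) (l : Fin 3 → ℝ) (i : Fin 3) :
    (∑ j, ((a • l + s • (Pi.single i 1 : Fin 3 → ℝ)) j) • Q j) = a • (∑ j, l j • Q j) + s • Q i := by
  have h1 : (∑ j, ((a • l + s • (Pi.single i 1 : Fin 3 → ℝ)) j) • Q j)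
      = ∑ j, ((a * l j) • Q j + (s * (Pi.single i 1 : Fin 3 → ℝ) j) • Q j) := by
    refine Finset.sum_congr rfl fun j _ => ?_
    have hco : ((a • l + s • (Pi.single i 1 : Fin 3 → ℝ)) j) = a * l j + s * (Pi.single i 1 : Fin 3 → ℝ) j := by
      simp [Pi.smul_apply, smul_eq_mul]
    rw [hco, add_smul]
  rw [h1, Finset.sum_add_distrib]
  congr 1
  · rw [Finset.smul_sum]
    exact Finset.sum_congr rfl fun j _ => (smul_smul a (l j) (Q j)).symm
  · rw [Finset.sum_eq_single i]
    · simp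
    · intro b _ hb; simp [Pi.single_eq_of_ne' hb.symm]
    · simp

lemma agg_two_pos (l : Fin 3 → ℝ)
    (hnb : ¬ ∃ (c : ℝ) (i : Fin 3), l = c • (Pi.single i 1 : Fin 3 → ℝ)) :
    ∃ i j : Fin 3, i ≠ j ∧ l i ≠ 0 ∧ l j ≠ 0 := by
  by_contra hcon
  push_neg at hcon
  apply hnb
  by_cases h0 : ∃ i, l i ≠ 0
  · obtain ⟨i, hi⟩ := h0
    refine ⟨l i, i, ?_⟩
    funext t
    by_cases ht : t = i
    · subst ht; simp
    · have := hcon i t (fun h => ht h.symm) hi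
      simp [Pi.single_eq_of_ne ht, this]
  · push_neg at h0
    exact ⟨0, 0, by funext t; simp [h0 t]⟩

/-- The set of nonnegative `λ ∈ ℝ³` such that `Q_λ = ∑ λᵢ Qᵢ` has exactly one
negative eigenvalue (counted with multiplicity). -/
def aggLambda {n : ℕ} (Q : Fin 3 → Matrix (Fin (n+1)) (Fin (n+1)) ℝ) : Set (Fin 3 → ℝ) :=
  {l | (∀ i, 0 ≤ l i) ∧ ∀ h : (∑ i, l i • Q i).IsHermitian,
    (Finset.univ.filter fun k => h.eigenvalues k < 0).card = 1}

set_option maxHeartbeats 2000000 in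
theorem stmt_11 {n : ℕ} (Q : Fin 3 → Matrix (Fin (n+1)) (Fin (n+1)) ℝ)
    (hsym : ∀ i, (Q i).IsHermitian)
    (l : Fin 3 → ℝ) (hl : l ∈ aggLambda Q)
    (hext : ∀ μ ∈ aggLambda Q, ∀ ν ∈ aggLambda Q, l = μ + ν →
      (∃ a : ℝ, 0 ≤ a ∧ μ = a • l) ∧ (∃ b : ℝ, 0 ≤ b ∧ ν = b • l))
    (hnb : ¬ ∃ (c : ℝ) (i : Fin 3), l = c • (Pi.single i 1 : Fin 3 → ℝ))
    (hsupp : ∃ i, l i = 0) :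
    (∑ i, l i • Q i).det = 0 := by
  classical
  by_contra hdet
  obtain ⟨hnn, hcount⟩ := hl
  set A := ∑ i, l i • Q i with hA_def
  have hAh : A.IsHermitian := herm_sum Q hsym l
  have hc1 : (Finset.univ.filter fun k => hAh.eigenvalues k < 0).card = 1 := hcount hAh
  obtain ⟨⟨v, hv⟩, W, c, hc, hWr, hWq⟩ := lemma_one hAh hc1 hdet
  obtain ⟨i, j, hij, hi, hj⟩ := agg_two_pos l hnb
  have hipos : 0 < l i := lt_of_le_of_ne (hnn i) (Ne.symm hi)
  set P := Q i with hP
  set K := ∑ a, ∑ b, |P a b| with hK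
  have hK0 : 0 ≤ K := Finset.sum_nonneg fun a _ => Finset.sum_nonneg fun b _ => abs_nonneg _
  set qv := dotProduct v (P *ᵥ v) with hqv
  set qa := dotProduct v (A *ᵥ v) with hqa
  set t := min (l i / 2) (min (c / (2 * (K + 1))) ((-qa) / (2 * (|qv| + 1)))) with ht
  have ht0 : 0 < t := by
    apply lt_min (by linarith)
    apply lt_min (by positivity)
    have : 0 < -qa := by linarith
    positivity
  have ht1 : t ≤ l i / 2 := min_le_left _ _
  have ht2 : t ≤ c / (2 * (K + 1)) := (min_le_right _ _).trans (min_le_left _ _)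
  have ht3 : t ≤ (-qa) / (2 * (|qv| + 1)) := (min_le_right _ _).trans (min_le_right _ _)
  have hexp : ∀ (s : ℝ) (y : Fin (n+1) → ℝ),
      dotProduct y (((1/2 : ℝ) • A + s • P) *ᵥ y)
        = 1/2 * dotProduct y (A *ᵥ y) + s * dotProduct y (P *ᵥ y) := by
    intro s y
    rw [add_mulVec, dotProduct_add, smul_mulVec, smul_mulVec,
      dotProduct_smul, dotProduct_smul]
    simp [smul_eq_mul]
  have key : ∀ s : ℝ, |s| ≤ t →
      ((1/2 : ℝ) • l + s • (Pi.single i 1 : Fin 3 → ℝ)) ∈ aggLambda Q := by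
    intro s hst
    obtain ⟨hs1, hs2⟩ := abs_le.mp hst
    refine ⟨?_, ?_⟩
    · intro j'
      by_cases hji : j' = i
      · subst hji
        simp only [Pi.add_apply, Pi.smul_apply, smul_eq_mul, Pi.single_eq_same, mul_one]
        linarith
      · simp only [Pi.add_apply, Pi.smul_apply, smul_eq_mul,
          Pi.single_eq_of_ne hji, mul_zero, add_zero]
        have := hnn j'
        linarith
    · intro h
      have hEq : (∑ j, (((1/2:ℝ) • l + s • (Pi.single i 1 : Fin 3 → ℝ)) j) • Q j)
          = (1/2 : ℝ) • A + s • P := comb_eq Q (1/2) s l i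
      refine lemma_two h v ?_ W hWr ?_
      · rw [hEq, hexp s v]
        have h1 : s * qv ≤ |s| * |qv| := by
          calc s * qv ≤ |s * qv| := le_abs_self _
            _ = |s| * |qv| := abs_mul _ _
        have h2 : |s| * |qv| ≤ t * |qv| := mul_le_mul_of_nonneg_right hst (abs_nonneg _)
        have h3 : t * (2 * (|qv| + 1)) ≤ -qa := (le_div_iff₀ (by positivity)).mp ht3
        nlinarith [abs_nonneg qv]
      · intro x hx hx0
        rw [hEq, hexp s x]
        have h1 := hWq x hx
        have h2 := qf_abs_le P x
        have hN : 0 < ‖x‖^2 := pow_pos (norm_pos_iff.mpr hx0) 2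
        have h3 : t * (2 * (K + 1)) ≤ c := (le_div_iff₀ (by positivity)).mp ht2
        have h4 : |s| * |dotProduct (x : Fin (n+1) → ℝ) (P *ᵥ x)| ≤ t * (K * ‖x‖^2) :=
          mul_le_mul hst h2 (abs_nonneg _) ht0.le
        have h5 : -(t * (K * ‖x‖^2)) ≤ s * dotProduct (x : Fin (n+1) → ℝ) (P *ᵥ x) := by
          have h6 := neg_abs_le (s * dotProduct (x : Fin (n+1) → ℝ) (P *ᵥ x))
          rw [abs_mul] at h6
          linarith
        nlinarith [mul_le_mul_of_nonneg_right h3 hN.le, mul_pos ht0 hN]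
  have hμ := key t (by rw [abs_of_pos ht0])
  have hν := key (-t) (by rw [abs_neg, abs_of_pos ht0])
  have hlsum : l = ((1/2 : ℝ) • l + t • (Pi.single i 1 : Fin 3 → ℝ))
      + ((1/2 : ℝ) • l + (-t) • (Pi.single i 1 : Fin 3 → ℝ)) := by
    funext x
    simp only [Pi.add_apply, Pi.smul_apply, smul_eq_mul]
    ring
  obtain ⟨⟨a, _, ha⟩, -⟩ := hext _ hμ _ hν hlsum
  have hj' := congrFun ha j
  have hi' := congrFun ha i
  simp only [Pi.add_apply, Pi.smul_apply, smul_eq_mul, Pi.single_eq_same, mul_one,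
    Pi.single_eq_of_ne hij.symm, mul_zero, add_zero] at hj' hi'
  -- hj' : 1/2 * l j = a * l j, hi' : 1/2 * l i + t * 1 = a * l i
  have ha2 : a = 1/2 := by
    have hz : (a - 1/2) * l j = 0 := by linarith [hj']
    rcases mul_eq_zero.mp hz with h | h
    · linarith
    · exact absurd h hj
  rw [ha2] at hi'
  linarith
end

section
/- Let Q ∈ ℝ^{(n+1)×(n+1)} be a symmetric matrix with exactly one negative eigenvalue, and suppose H ⊆ ℝ^{n+1} is an n-dimensional subspace such that the restriction of the quadratic form xᵀQx to H is positive definite. Then the set {x ∈ ℝ^{n+1} | xᵀQx < 0} is disjoint from H, and is a union of two open convex cones that are reflections of each other through the origin, each contained in one of the two open half-spaces determined by H. -/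
open Matrix

private lemma stmt13_expand {m : ℕ} (Q : Matrix (Fin m) (Fin m) ℝ) (x y : Fin m → ℝ) (a b : ℝ) :
    (a • x + b • y) ⬝ᵥ Q.mulVec (a • x + b • y) =
      a^2 * (x ⬝ᵥ Q.mulVec x) + a*b*(x ⬝ᵥ Q.mulVec y) + a*b*(y ⬝ᵥ Q.mulVec x)
        + b^2 * (y ⬝ᵥ Q.mulVec y) := by
  simp only [Matrix.mulVec_add, Matrix.mulVec_smul, dotProduct_add,
    add_dotProduct, dotProduct_smul, smul_dotProduct, smul_eq_mul]
  ring

private lemma stmt13_core (Bxx Byy Bxy p tx ty a b : ℝ) (hp : 0 < p) (htx : 0 < tx)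
    (hty : 0 < ty) (hBxx : 0 ≤ Bxx) (hByy : 0 ≤ Byy) (hCS : Bxy^2 ≤ Bxx*Byy)
    (h1 : Bxx < tx^2*p) (h2 : Byy < ty^2*p) (ha : 0 ≤ a) (hb : 0 ≤ b) (hab : a + b = 1) :
    a^2*Bxx + a*b*Bxy + a*b*Bxy + b^2*Byy < (a*tx+b*ty)^2*p := by
  have hcross : Bxy < tx*ty*p := by
    have h3 : Bxy^2 < (tx*ty*p)^2 := by nlinarith
    nlinarith [sq_nonneg (Bxy - tx*ty*p), mul_pos (mul_pos htx hty) hp]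
  rcases eq_or_lt_of_le ha with rfl0 | ha'
  · have hb1 : b = 1 := by linarith
    subst hb1; rw [← rfl0]; nlinarith
  rcases eq_or_lt_of_le hb with rfl0 | hb'
  · have ha1 : a = 1 := by linarith
    subst ha1; rw [← rfl0]; nlinarith
  have k1 : a^2*Bxx < a^2*(tx^2*p) := by
    exact mul_lt_mul_of_pos_left h1 (by positivity)
  have k2 : b^2*Byy < b^2*(ty^2*p) := by
    exact mul_lt_mul_of_pos_left h2 (by positivity)
  have k3 : a*b*Bxy < a*b*(tx*ty*p) := by
    exact mul_lt_mul_of_pos_left hcross (by positivity)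
  nlinarith

set_option maxHeartbeats 2000000 in
theorem stmt_13 {n : ℕ} (Q : Matrix (Fin (n+1)) (Fin (n+1)) ℝ) (hQ : Q.IsHermitian)
    (hneg : (Finset.univ.filter fun i => hQ.eigenvalues i < 0).card = 1)
    (H : Submodule ℝ (Fin (n+1) → ℝ)) (hH : Module.finrank ℝ H = n)
    (hpos : ∀ v ∈ H, v ≠ 0 → 0 < v ⬝ᵥ Q.mulVec v) :
    (∀ x : Fin (n+1) → ℝ, x ⬝ᵥ Q.mulVec x < 0 → x ∉ H) ∧
    ∃ φ : (Fin (n+1) → ℝ) →ₗ[ℝ] ℝ, LinearMap.ker φ = H ∧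
      ({x : Fin (n+1) → ℝ | x ⬝ᵥ Q.mulVec x < 0} =
        {x | x ⬝ᵥ Q.mulVec x < 0 ∧ 0 < φ x} ∪ {x | x ⬝ᵥ Q.mulVec x < 0 ∧ φ x < 0}) ∧
      Convex ℝ {x : Fin (n+1) → ℝ | x ⬝ᵥ Q.mulVec x < 0 ∧ 0 < φ x} ∧
      Convex ℝ {x : Fin (n+1) → ℝ | x ⬝ᵥ Q.mulVec x < 0 ∧ φ x < 0} ∧
      IsOpen {x : Fin (n+1) → ℝ | x ⬝ᵥ Q.mulVec x < 0 ∧ 0 < φ x} ∧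
      IsOpen {x : Fin (n+1) → ℝ | x ⬝ᵥ Q.mulVec x < 0 ∧ φ x < 0} ∧
      (∀ (c : ℝ), 0 < c → ∀ x : Fin (n+1) → ℝ,
        (x ⬝ᵥ Q.mulVec x < 0 ∧ 0 < φ x) →
        ((c • x) ⬝ᵥ Q.mulVec (c • x) < 0 ∧ 0 < φ (c • x))) ∧
      (∀ (c : ℝ), 0 < c → ∀ x : Fin (n+1) → ℝ,
        (x ⬝ᵥ Q.mulVec x < 0 ∧ φ x < 0) →
        ((c • x) ⬝ᵥ Q.mulVec (c • x) < 0 ∧ φ (c • x) < 0)) ∧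
      (∀ x : Fin (n+1) → ℝ,
        (x ⬝ᵥ Q.mulVec x < 0 ∧ 0 < φ x) ↔ ((-x) ⬝ᵥ Q.mulVec (-x) < 0 ∧ φ (-x) < 0)) := by
  classical
  -- symmetry of the bilinear form
  have hQt : Qᵀ = Q := by
    have := hQ.eq
    simpa [Matrix.conjTranspose_eq_transpose_of_trivial] using this
  have hsymm : ∀ x y : Fin (n+1) → ℝ, x ⬝ᵥ Q.mulVec y = y ⬝ᵥ Q.mulVec x := by
    intro x y
    rw [Matrix.dotProduct_mulVec, ← hQt, Matrix.vecMul_transpose, hQt, dotProduct_comm]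
  -- nonnegativity on H
  have hnn : ∀ v ∈ H, 0 ≤ v ⬝ᵥ Q.mulVec v := by
    intro v hv
    rcases eq_or_ne v 0 with rfl | h
    · simp
    · exact (hpos v hv h).le
  -- disjointness
  have hdisj : ∀ x : Fin (n+1) → ℝ, x ⬝ᵥ Q.mulVec x < 0 → x ∉ H := by
    intro x hx hxH
    exact absurd hx (not_lt.mpr (hnn x hxH))
  -- existence of a negative vector
  have hex : ∃ x : Fin (n+1) → ℝ, x ⬝ᵥ Q.mulVec x < 0 := by
    by_contra hc
    push_neg at hc
    have hps : Q.PosSemidef := .of_dotProduct_mulVec_nonneg hQ fun x => by simpa using hc x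
    obtain ⟨i, hi⟩ : ∃ i, hQ.eigenvalues i < 0 := by
      have h1 : (Finset.univ.filter fun i => hQ.eigenvalues i < 0).Nonempty := by
        rw [← Finset.card_pos, hneg]; norm_num
      obtain ⟨i, hi⟩ := h1
      exact ⟨i, (Finset.mem_filter.mp hi).2⟩
    exact absurd (hps.eigenvalues_nonneg i) (not_le.mpr hi)
  -- find w orthogonal to H
  have hEdim : Module.finrank ℝ (Fin (n+1) → ℝ) = n + 1 := by
    simp [Module.finrank_pi]
  obtain ⟨w, hw0, hworth⟩ : ∃ w : Fin (n+1) → ℝ, w ≠ 0 ∧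
      ∀ h ∈ H, w ⬝ᵥ Q.mulVec h = 0 := by
    let ψ : (Fin (n+1) → ℝ) →ₗ[ℝ] Module.Dual ℝ H :=
      H.subtype.dualMap ∘ₗ (Matrix.toBilin' Q)
    have hk : LinearMap.ker ψ ≠ ⊥ := by
      apply LinearMap.ker_ne_bot_of_finrank_lt
      rw [Subspace.dual_finrank_eq, hH, hEdim]; omega
    obtain ⟨w, hw, hw0⟩ := Submodule.exists_mem_ne_zero_of_ne_bot hk
    refine ⟨w, hw0, fun h hh => ?_⟩
    have h2 : ψ w ⟨h, hh⟩ = 0 := by rw [LinearMap.mem_ker.mp hw]; rfl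
    simpa [ψ, Matrix.toBilin'_apply'] using h2
  have hworth' : ∀ h ∈ H, h ⬝ᵥ Q.mulVec w = 0 := fun h hh => by
    rw [hsymm]; exact hworth h hh
  -- w ∉ H
  have hwH : w ∉ H := by
    intro hwH
    exact absurd (hworth w hwH) (ne_of_gt (hpos w hwH hw0))
  -- H ⊔ span w = ⊤
  have hinf : H ⊓ Submodule.span ℝ {w} = ⊥ := by
    rw [Submodule.eq_bot_iff]
    rintro x ⟨hxH, hxS⟩
    obtain ⟨c, rfl⟩ := Submodule.mem_span_singleton.mp hxS
    rcases eq_or_ne c 0 with rfl | hc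
    · simp
    · refine absurd ?_ hwH
      have h3 := H.smul_mem c⁻¹ hxH
      rwa [smul_smul, inv_mul_cancel₀ hc, one_smul] at h3
  have hsup : H ⊔ Submodule.span ℝ {w} = ⊤ := by
    apply Submodule.eq_top_of_finrank_eq
    have := Submodule.finrank_sup_add_finrank_inf_eq H (Submodule.span ℝ {w})
    rw [hinf, hH, finrank_span_singleton hw0] at this
    simp only [finrank_bot, add_zero] at this
    rw [this, hEdim]
  -- decomposition
  have hdec0 : ∀ x : Fin (n+1) → ℝ, ∃ t : ℝ, x - t • w ∈ H := by
    intro x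
    have hx : x ∈ H ⊔ Submodule.span ℝ {w} := by rw [hsup]; trivial
    obtain ⟨h, hh, y, hy, rfl⟩ := Submodule.mem_sup.mp hx
    obtain ⟨t, rfl⟩ := Submodule.mem_span_singleton.mp hy
    exact ⟨t, by simpa using hh⟩
  -- q < 0
  obtain ⟨q, hq_def⟩ : ∃ q : ℝ, q = w ⬝ᵥ Q.mulVec w := ⟨_, rfl⟩
  have hval0 : ∀ (h : Fin (n+1) → ℝ), h ∈ H → ∀ t : ℝ,
      (h + t • w) ⬝ᵥ Q.mulVec (h + t • w) = h ⬝ᵥ Q.mulVec h + t^2 * q := by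
    intro h hh t
    have := stmt13_expand Q h w 1 t
    simp only [one_smul, one_pow, one_mul, mul_one] at this
    rw [this, hworth' h hh, hworth h hh, ← hq_def]
    ring
  have hqneg : q < 0 := by
    obtain ⟨x₀, hx₀⟩ := hex
    obtain ⟨t, ht⟩ := hdec0 x₀
    have hx0eq : x₀ = (x₀ - t • w) + t • w := by ring_nf
    rw [hx0eq, hval0 _ ht t] at hx₀
    have := hnn _ ht
    nlinarith [sq_nonneg t]
  -- define φ
  obtain ⟨φ, hφ_apply⟩ : ∃ φ : (Fin (n+1) → ℝ) →ₗ[ℝ] ℝ,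
      ∀ x, φ x = q⁻¹ * (w ⬝ᵥ Q.mulVec x) :=
    ⟨q⁻¹ • ((Matrix.toBilin' Q) w), fun x => by
      simp [Matrix.toBilin'_apply', smul_eq_mul]⟩
  have hφw : φ w = 1 := by
    rw [hφ_apply, ← hq_def]
    exact inv_mul_cancel₀ (ne_of_lt hqneg)
  have hφH : ∀ h ∈ H, φ h = 0 := by
    intro h hh
    rw [hφ_apply, hworth h hh, mul_zero]
  -- every x decomposes as (x - φ x • w) + φ x • w with first part in H
  have hdec : ∀ x : Fin (n+1) → ℝ, x - φ x • w ∈ H := by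
    intro x
    obtain ⟨t, ht⟩ := hdec0 x
    have : φ x = t := by
      have h1 : φ (x - t • w) = 0 := hφH _ ht
      have h2 : φ x - t * φ w = 0 := by
        simpa [map_sub, _root_.map_smul, smul_eq_mul] using h1
      rw [hφw] at h2; linarith
    rwa [this]
  have hker : LinearMap.ker φ = H := by
    ext x
    constructor
    · intro hx
      have hx0 : φ x = 0 := LinearMap.mem_ker.mp hx
      have := hdec x
      rwa [hx0, zero_smul, sub_zero] at this
    · intro hx
      exact LinearMap.mem_ker.mpr (hφH x hx)
  -- the value formula
  have hval : ∀ x : Fin (n+1) → ℝ,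
      x ⬝ᵥ Q.mulVec x = (x - φ x • w) ⬝ᵥ Q.mulVec (x - φ x • w) + (φ x)^2 * q := by
    intro x
    have hx : x = (x - φ x • w) + φ x • w := by ring_nf
    conv_lhs => rw [hx]
    exact hval0 _ (hdec x) _
  -- negative vectors are not in ker
  have hφne : ∀ x : Fin (n+1) → ℝ, x ⬝ᵥ Q.mulVec x < 0 → φ x ≠ 0 := by
    intro x hx h0
    exact hdisj x hx (by rw [← hker]; exact LinearMap.mem_ker.mpr h0)
  -- Cauchy-Schwarz on H
  have hCS : ∀ u ∈ H, ∀ v ∈ H,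
      (u ⬝ᵥ Q.mulVec v)^2 ≤ (u ⬝ᵥ Q.mulVec u) * (v ⬝ᵥ Q.mulVec v) := by
    intro u hu v hv
    have hdisc : discrim (v ⬝ᵥ Q.mulVec v) (2 * (u ⬝ᵥ Q.mulVec v)) (u ⬝ᵥ Q.mulVec u) ≤ 0 := by
      apply discrim_le_zero
      intro s
      have hmem : u + s • v ∈ H := H.add_mem hu (H.smul_mem s hv)
      have := hnn _ hmem
      have hexp := stmt13_expand Q u v 1 s
      simp only [one_smul, one_pow, one_mul, mul_one] at hexp
      rw [hexp] at this
      have hvu : v ⬝ᵥ Q.mulVec u = u ⬝ᵥ Q.mulVec v := hsymm v u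
      rw [hvu] at this
      nlinarith [this]
    rw [discrim] at hdisc
    nlinarith [hdisc]
  -- convexity of the positive-side cone
  have hconv : Convex ℝ {x : Fin (n+1) → ℝ | x ⬝ᵥ Q.mulVec x < 0 ∧ 0 < φ x} := by
    rintro x ⟨hx, hφx⟩ y ⟨hy, hφy⟩ a b ha hb hab
    have hφz : φ (a • x + b • y) = a * φ x + b * φ y := by
      simp [map_add, _root_.map_smul, smul_eq_mul]
    constructor
    · obtain ⟨u, hu⟩ : ∃ v, v = x - φ x • w := ⟨_, rfl⟩
      obtain ⟨v, hv⟩ : ∃ v', v' = y - φ y • w := ⟨_, rfl⟩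
      have huH : u ∈ H := hu ▸ hdec x
      have hvH : v ∈ H := hv ▸ hdec y
      have hxval := hval x; rw [← hu] at hxval
      have hyval := hval y; rw [← hv] at hyval
      have hz : a • x + b • y - φ (a • x + b • y) • w = a • u + b • v := by
        rw [hφz, hu, hv]; module
      have hzval := hval (a • x + b • y)
      rw [hz, hφz, stmt13_expand Q u v a b, hsymm v u] at hzval
      have hp : 0 < -q := by linarith
      have h1 : u ⬝ᵥ Q.mulVec u < (φ x)^2 * -q := by nlinarith [hxval, hx]
      have h2 : v ⬝ᵥ Q.mulVec v < (φ y)^2 * -q := by nlinarith [hyval, hy]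
      have key := stmt13_core (u ⬝ᵥ Q.mulVec u) (v ⬝ᵥ Q.mulVec v) (u ⬝ᵥ Q.mulVec v)
        (-q) (φ x) (φ y) a b hp hφx hφy (hnn u huH) (hnn v hvH)
        (hCS u huH v hvH) h1 h2 ha hb hab
      show (a • x + b • y) ⬝ᵥ Q.mulVec (a • x + b • y) < 0
      rw [hzval]
      nlinarith [key]
    · rw [hφz]
      rcases eq_or_lt_of_le ha with rfl0 | ha'
      · have hb1 : b = 1 := by linarith
        rw [← rfl0, hb1]; simpa using hφy
      · nlinarith [mul_nonneg hb hφy.le]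
  -- negation facts
  have hQneg : ∀ x : Fin (n+1) → ℝ, (-x) ⬝ᵥ Q.mulVec (-x) = x ⬝ᵥ Q.mulVec x := by
    intro x
    rw [Matrix.mulVec_neg, neg_dotProduct, dotProduct_neg, neg_neg]
  have hQsmul : ∀ (c : ℝ) (x : Fin (n+1) → ℝ),
      (c • x) ⬝ᵥ Q.mulVec (c • x) = c^2 * (x ⬝ᵥ Q.mulVec x) := by
    intro c x
    rw [Matrix.mulVec_smul, smul_dotProduct, dotProduct_smul]
    simp [smul_eq_mul]; ring
  -- second set is the negation of the first
  have hset : {x : Fin (n+1) → ℝ | x ⬝ᵥ Q.mulVec x < 0 ∧ φ x < 0} =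
      -{x : Fin (n+1) → ℝ | x ⬝ᵥ Q.mulVec x < 0 ∧ 0 < φ x} := by
    ext x
    simp only [Set.mem_neg, Set.mem_setOf_eq, hQneg, map_neg]
    constructor
    · rintro ⟨h1, h2⟩; exact ⟨h1, by linarith⟩
    · rintro ⟨h1, h2⟩; exact ⟨h1, by linarith⟩
  -- continuity
  have hcont : Continuous fun x : Fin (n+1) → ℝ => x ⬝ᵥ Q.mulVec x := by
    simp only [dotProduct, Matrix.mulVec]
    apply continuous_finset_sum
    intro i _
    apply Continuous.mul (continuous_apply i)
    apply continuous_finset_sum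
    intro j _
    exact Continuous.mul continuous_const (continuous_apply j)
  have hφcont : Continuous φ := φ.continuous_of_finiteDimensional
  have hopen1 : IsOpen {x : Fin (n+1) → ℝ | x ⬝ᵥ Q.mulVec x < 0 ∧ 0 < φ x} := by
    have : {x : Fin (n+1) → ℝ | x ⬝ᵥ Q.mulVec x < 0 ∧ 0 < φ x} =
        {x | x ⬝ᵥ Q.mulVec x < 0} ∩ {x | 0 < φ x} := rfl
    rw [this]
    exact (isOpen_lt hcont continuous_const).inter (isOpen_lt continuous_const hφcont)
  have hopen2 : IsOpen {x : Fin (n+1) → ℝ | x ⬝ᵥ Q.mulVec x < 0 ∧ φ x < 0} := by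
    have : {x : Fin (n+1) → ℝ | x ⬝ᵥ Q.mulVec x < 0 ∧ φ x < 0} =
        {x | x ⬝ᵥ Q.mulVec x < 0} ∩ {x | φ x < 0} := rfl
    rw [this]
    exact (isOpen_lt hcont continuous_const).inter (isOpen_lt hφcont continuous_const)
  refine ⟨hdisj, φ, hker, ?_, hconv, ?_, hopen1, hopen2, ?_, ?_, ?_⟩
  · -- union
    ext x
    simp only [Set.mem_setOf_eq, Set.mem_union]
    constructor
    · intro hx
      rcases lt_trichotomy (φ x) 0 with h | h | h
      · exact Or.inr ⟨hx, h⟩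
      · exact absurd h (hφne x hx)
      · exact Or.inl ⟨hx, h⟩
    · rintro (⟨h, _⟩ | ⟨h, _⟩) <;> exact h
  · -- convexity of second set
    rw [hset]
    exact hconv.neg
  · -- cone 1
    intro c hc x ⟨h1, h2⟩
    refine ⟨by rw [hQsmul]; exact mul_neg_of_pos_of_neg (pow_pos hc 2) h1, ?_⟩
    rw [_root_.map_smul, smul_eq_mul]
    exact mul_pos hc h2
  · -- cone 2
    intro c hc x ⟨h1, h2⟩
    refine ⟨by rw [hQsmul]; exact mul_neg_of_pos_of_neg (pow_pos hc 2) h1, ?_⟩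
    rw [_root_.map_smul, smul_eq_mul]
    exact mul_neg_of_pos_of_neg hc h2
  · -- reflection
    intro x
    simp only [hQneg, map_neg]
    constructor
    · rintro ⟨h1, h2⟩; exact ⟨h1, by linarith⟩
    · rintro ⟨h1, h2⟩; exact ⟨h1, by linarith⟩
end

section
/- Let f₁, f₂, f₃ : ℝⁿ → ℝ be continuous and S_λ = {x | Σᵢλᵢfᵢ(x) ≤ 0} for λ ∈ ℝ³₊. Let λ⁽¹⁾, ..., λ⁽ᵏ⁺¹⁾ ∈ ℝ³₊ and set T_k = ∩_{j=1}^{k} S_{λ⁽ʲ⁾} and T_{k+1} = T_k ∩ S_{λ⁽ᵏ⁺¹⁾}. Suppose f_{λ⁽ᵏ⁺¹⁾}(x) ≠ 0 for all x ∈ T_{k+1}, and suppose every connected component of T_k contains a point of T_{k+1}. Then T_{k+1} = T_k. -/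
theorem stmt_19 {n k : ℕ} (f : Fin 3 → (Fin n → ℝ) → ℝ) (hf : ∀ i, Continuous (f i))
    (l : Fin (k+1) → Fin 3 → ℝ) (hl : ∀ j i, 0 ≤ l j i) :
    ∀ (flam : (Fin 3 → ℝ) → (Fin n → ℝ) → ℝ),
      (flam = fun lam x => ∑ i, lam i * f i x) →
    ∀ (Tk Tk1 : Set (Fin n → ℝ)),
      Tk = {x | ∀ j : Fin k, flam (l j.castSucc) x ≤ 0} →
      Tk1 = Tk ∩ {x | flam (l (Fin.last k)) x ≤ 0} →
      (∀ x ∈ Tk1, flam (l (Fin.last k)) x ≠ 0) →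
      (∀ x ∈ Tk, ∃ y ∈ Tk1, y ∈ connectedComponentIn Tk x) →
      Tk1 = Tk := by
  intro flam hflam Tk Tk1 hTk hTk1 hne hcomp
  have hg : Continuous (flam (l (Fin.last k))) := by
    subst hflam
    exact continuous_finset_sum _ fun i _ => (continuous_const.mul (hf i))
  apply Set.Subset.antisymm
  · rw [hTk1]; exact Set.inter_subset_left
  · intro x hx
    obtain ⟨y, hy1, hyC⟩ := hcomp x hx
    by_contra hx1
    have hgx : 0 < flam (l (Fin.last k)) x := by
      by_contra h
      push_neg at h
      exact hx1 (hTk1 ▸ ⟨hx, h⟩)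
    have hgy : flam (l (Fin.last k)) y < 0 := by
      have hy1' := hy1
      rw [hTk1] at hy1'
      exact lt_of_le_of_ne hy1'.2 (hne y hy1)
    have hC : IsPreconnected (connectedComponentIn Tk x) :=
      (isConnected_connectedComponentIn_iff.mpr hx).isPreconnected
    have hxC : x ∈ connectedComponentIn Tk x := mem_connectedComponentIn hx
    have hiv := hC.intermediate_value hyC hxC (hg.continuousOn)
    have h0 : (0 : ℝ) ∈ flam (l (Fin.last k)) '' connectedComponentIn Tk x :=
      hiv ⟨le_of_lt hgy, le_of_lt hgx⟩
    obtain ⟨z, hzC, hz0⟩ := h0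
    have hzTk : z ∈ Tk := connectedComponentIn_subset Tk x hzC
    have hzTk1 : z ∈ Tk1 := hTk1 ▸ ⟨hzTk, le_of_eq hz0⟩
    exact hne z hzTk1 hz0
end
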